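/- Let f: X → B be a semistable fibration. Then there is an inclusion of sheaves D ↪ K_∂; that is, every relative 1-form liftable to a d-closed holomorphic 1-form on X is liftable to a holomorphic 1-form on X. -/

import Mathlib

/-!
The map `D = coker ι ⟶ K_∂` composed with `K_∂ ↪ f_*Ω¹_{X/B}` is the map `coker ι ⟶ f_*Ω¹_{X/B}`
induced by `incl ≫ π`, so it suffices that the latter is mono, i.e. that
`ω_B → f_*Ω¹_{X,d} → f_*Ω¹_{X/B}` is exact. This follows from the exactness of
`ω_B → f_*Ω¹_X → f_*Ω¹_{X/B}` because `f_*Ω¹_{X,d} ↪ f_*Ω¹_X` is a monomorphism.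
-/

open CategoryTheory Limits

namespace CategoryTheory.ShortComplex

variable {𝒜 : Type*} [Category 𝒜] [Abelian 𝒜]

lemma exact_of_exact_comp_mono {A B C D : 𝒜} {f : A ⟶ B} {g : B ⟶ C} [Mono g] {h : C ⟶ D}
    (w : (f ≫ g) ≫ h = 0) (hfg : (ShortComplex.mk (f ≫ g) h w).Exact) :
    (ShortComplex.mk f (g ≫ h) (by simpa using w)).Exact := by
  rw [exact_iff_exact_up_to_refinements]
  intro A' x hx
  obtain ⟨A'', p, _, x₁, hx₁⟩ :=
    hfg.exact_up_to_refinements (x ≫ g) (by simpa using hx)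
  refine ⟨A'', p, inferInstance, x₁, ?_⟩
  simpa [← cancel_mono g] using hx₁

end CategoryTheory.ShortComplex

theorem statement_2_general
    (𝒜 : Type*) [Category 𝒜] [Abelian 𝒜]
    (ωB Md M ΩXB R1 : 𝒜)  -- ω_B, f_*Ω¹_{X,d}, f_*Ω¹_X, f_*Ω¹_{X/B}, R¹f_*𝒪_X ⊗ ω_B
    (ι : ωB ⟶ Md)         -- ω_B → f_*Ω¹_{X,d};  D := coker ι
    (incl : Md ⟶ M)       -- f_*Ω¹_{X,d} ↪ f_*Ω¹_X
    (π : M ⟶ ΩXB)         -- f_*Ω¹_X → f_*Ω¹_{X/B}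
    (d : ΩXB ⟶ R1)        -- the connecting morphism ∂;  K_∂ := ker ∂
    [Mono incl]
    -- exactness of 0 → ω_B → f_*Ω¹_X → f_*Ω¹_{X/B} (pushforward left exactness)
    (w1 : (ι ≫ incl) ≫ π = 0)
    (hexact : (ShortComplex.mk (ι ≫ incl) π w1).Exact)
    -- closed relative forms are liftable:  (incl ≫ π) ≫ ∂ = 0
    (w2 : (incl ≫ π) ≫ d = 0)
    (hz : ι ≫ kernel.lift d (incl ≫ π) w2 = 0) :
    -- conclusion: the induced map D = coker ι ⟶ K_∂ = ker ∂ is a monomorphism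
    Mono (cokernel.desc ι (kernel.lift d (incl ≫ π) w2) hz) := by
  have hcomp : cokernel.desc ι (kernel.lift d (incl ≫ π) w2) hz ≫ kernel.ι d =
      cokernel.desc ι (incl ≫ π) (by simpa using w1) := by
    ext
    simp
  have : Mono (cokernel.desc ι (incl ≫ π) (by simpa using w1)) :=
    (ShortComplex.exact_of_exact_comp_mono w1 hexact).mono_cokernelDesc
  rw [← hcomp] at this
  exact mono_of_mono _ (kernel.ι d)

theorem statement_2
    (𝒜 : Type*) [Category 𝒜] [Abelian 𝒜]
    (ωB Md M ΩXB R1 : 𝒜)  -- ω_B, f_*Ω¹_{X,d}, f_*Ω¹_X, f_*Ω¹_{X/B}, R¹f_*𝒪_X ⊗ ω_B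
    (ι : ωB ⟶ Md)         -- ω_B → f_*Ω¹_{X,d};  D := coker ι
    (incl : Md ⟶ M)       -- f_*Ω¹_{X,d} ↪ f_*Ω¹_X
    (π : M ⟶ ΩXB)         -- f_*Ω¹_X → f_*Ω¹_{X/B}
    (d : ΩXB ⟶ R1)        -- the connecting morphism ∂;  K_∂ := ker ∂
    [Mono ι] [Mono incl]
    -- exactness of 0 → ω_B → f_*Ω¹_X → f_*Ω¹_{X/B} (pushforward left exactness)
    (w1 : (ι ≫ incl) ≫ π = 0)
    (hexact : (ShortComplex.mk (ι ≫ incl) π w1).Exact)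
    -- closed relative forms are liftable:  (incl ≫ π) ≫ ∂ = 0
    (w2 : (incl ≫ π) ≫ d = 0)
    (hz : ι ≫ kernel.lift d (incl ≫ π) w2 = 0) :
    -- conclusion: the induced map D = coker ι ⟶ K_∂ = ker ∂ is a monomorphism
    Mono (cokernel.desc ι (kernel.lift d (incl ≫ π) w2) hz) :=
  statement_2_general 𝒜 ωB Md M ΩXB R1 ι incl π d w1 hexact w2 hz
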